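/- Let n and x be natural numbers with x ≤ n. Then for every real number a, J_n(a, x) = ((n+3)! / (x! (n−x)!)) · (1 − a) · (I_n(1 − a, n − x) − I_n(a, x)). -/

import Mathlib

/-- `I_n(a, x) = a^{x+2} ∫₀¹ t^{x+1} (1 − t) (1 − a t)^{n−x} dt`. -/
noncomputable def In (n x : ℕ) (a : ℝ) : ℝ :=
  a ^ (x + 2) * ∫ t in (0 : ℝ)..1, t ^ (x + 1) * (1 - t) * (1 - a * t) ^ (n - x)

/-- The polynomial `J_n(a, x)`. -/
noncomputable def Jn (n x : ℕ) (a : ℝ) : ℝ :=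
  2 * a ^ (x + 2) * ∑ r ∈ Finset.range (n - x + 1),
      ((n + 3).choose (n - x - r) : ℝ) * ((x + r).choose r : ℝ) * (-1) ^ r * a ^ r
    - ((n : ℝ) - x + 1) * ((n : ℝ) + 3) * a + ((n : ℝ) - x + 1) * ((x : ℝ) + 1)

/-!
Put `m = n - x`, `K = (n+3)!/(x! m!)`, `p(u) = u^x (1-u)^(m+1)` and
`A(a) = a^(x+2) ∫₀¹ t^x (1-t)^2 (1-at)^m dt`. The substitutions `u = 1 - (1-a) t` and `u = a t`
give `(1-a) I_n(1-a, m) = ∫ₐ¹ (u-a) p(u) du` and `A(a) + (1-a) I_n(a, x) = ∫₀ᵃ (a-u) p(u) du`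
(the integrands combine because `(1-t) + (1-a) t = 1 - a t`), so the right-hand side is
`K A(a) + K ∫₀¹ (u-a) p(u) du`. Expanding `(1-at)^m` binomially and evaluating Beta integrals,
`K A(a)` is the binomial sum in `J_n`, and the affine function `K ∫₀¹ (u-a) p(u) du` is the rest
of `J_n`.
-/

open Finset intervalIntegral Nat

theorem integral_pow_mul_one_sub_pow (p q : ℕ) :
    ∫ t in (0 : ℝ)..1, t ^ p * (1 - t) ^ q = (p ! * q ! : ℝ) / (p + q + 1)! := by
  induction q generalizing p with
  | zero =>
    simp only [pow_zero, mul_one, integral_pow, one_pow, zero_pow p.succ_ne_zero, sub_zero,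
      add_zero, Nat.factorial_succ, Nat.factorial_zero]
    push_cast
    field_simp
  | succ q ih =>
    have hsplit : ∀ t : ℝ,
        t ^ p * (1 - t) ^ (q + 1) = t ^ p * (1 - t) ^ q - t ^ (p + 1) * (1 - t) ^ q :=
      fun t => by ring
    simp_rw [hsplit]
    rw [integral_sub (by apply Continuous.intervalIntegrable; fun_prop)
      (by apply Continuous.intervalIntegrable; fun_prop), ih, ih]
    rw [show p + 1 + q + 1 = p + q + 1 + 1 by ring, show p + (q + 1) + 1 = p + q + 1 + 1 by ring]
    simp only [Nat.factorial_succ]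
    push_cast
    field_simp
    ring

theorem integral_sub_mul_pow_mul_one_sub_pow (p q : ℕ) (a : ℝ) :
    ∫ v in (0 : ℝ)..1, (v - a) * (v ^ p * (1 - v) ^ q)
      = ((p + 1)! * q ! : ℝ) / (p + 1 + q + 1)! - a * ((p ! * q ! : ℝ) / (p + q + 1)!) := by
  have hsplit : ∀ v : ℝ, (v - a) * (v ^ p * (1 - v) ^ q)
      = v ^ (p + 1) * (1 - v) ^ q - a * (v ^ p * (1 - v) ^ q) := fun v => by ring
  simp_rw [hsplit]
  rw [integral_sub (by apply Continuous.intervalIntegrable; fun_prop)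
    (by apply Continuous.intervalIntegrable; fun_prop), integral_const_mul,
    integral_pow_mul_one_sub_pow, integral_pow_mul_one_sub_pow]

theorem sq_mul_integral_one_sub_mul_comp_mul (f : ℝ → ℝ) (c : ℝ) :
    c ^ 2 * ∫ t in (0 : ℝ)..1, (1 - t) * f (c * t) = ∫ u in (0 : ℝ)..c, (c - u) * f u := by
  rcases eq_or_ne c 0 with rfl | hc
  · simp
  have h := integral_comp_mul_left (fun u => (c - u) * f u) (a := 0) (b := 1) hc
  simp only [mul_zero, mul_one, smul_eq_mul] at h
  rw [← mul_inv_cancel_left₀ hc (∫ u in (0 : ℝ)..c, (c - u) * f u), ← h, ← integral_const_mul,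
    ← integral_const_mul]
  congr 1
  ext t
  ring

theorem integral_sub_mul_sub_integral_sub_mul (q : ℝ → ℝ) (hq : Continuous q) (a b c : ℝ) :
    (∫ v in a..b, (v - a) * q v) - ∫ v in c..a, (a - v) * q v = ∫ v in c..b, (v - a) * q v := by
  have hneg : ∫ v in c..a, (a - v) * q v = - ∫ v in c..a, (v - a) * q v := by
    rw [← integral_neg]; congr 1; ext v; ring
  rw [hneg, sub_neg_eq_add, add_comm, integral_add_adjacent_intervals] <;>
    apply Continuous.intervalIntegrable <;> fun_prop

theorem two_mul_choose_mul_choose_eq (x m r : ℕ) (hr : r ≤ m) :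
    2 * ((x + m + 3).choose (m - r) * (x + r).choose r : ℝ)
      = (x + m + 3)! / (x ! * m !) * m.choose r * ((x + r)! * 2 ! / (x + r + 2 + 1)!) := by
  rw [Nat.cast_choose ℝ (by omega : m - r ≤ x + m + 3), Nat.cast_choose ℝ (by omega : r ≤ x + r),
    Nat.cast_choose ℝ hr, show x + m + 3 - (m - r) = x + r + 2 + 1 by omega,
    show x + r - r = x by omega]
  simp only [Nat.factorial_two, Nat.cast_ofNat]
  field_simp

theorem two_mul_sum_choose_eq_integral (x m : ℕ) (a : ℝ) :
    2 * ∑ r ∈ range (m + 1), ((x + m + 3).choose (m - r) : ℝ) * (x + r).choose r * (-1) ^ r * a ^ r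
      = (x + m + 3)! / (x ! * m !) * ∫ t in (0 : ℝ)..1, t ^ x * (1 - t) ^ 2 * (1 - a * t) ^ m := by
  have hexpand : ∀ t : ℝ, t ^ x * (1 - t) ^ 2 * (1 - a * t) ^ m
      = ∑ r ∈ range (m + 1), (m.choose r * (-1) ^ r * a ^ r : ℝ) * (t ^ (x + r) * (1 - t) ^ 2) := by
    intro t
    rw [sub_eq_neg_add (1 : ℝ) (a * t), add_pow, mul_sum]
    refine Finset.sum_congr rfl fun r _ => ?_
    ring
  simp_rw [hexpand]
  rw [integral_finsetSum fun r _ => by apply Continuous.intervalIntegrable; fun_prop,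
    mul_sum, mul_sum]
  refine Finset.sum_congr rfl fun r hr => ?_
  rw [integral_const_mul, integral_pow_mul_one_sub_pow]
  linear_combination ((-1) ^ r * a ^ r) *
    two_mul_choose_mul_choose_eq x m r (Nat.lt_succ_iff.mp (mem_range.mp hr))

theorem pow_mul_integral_add_one_sub_mul_In (x m : ℕ) (a : ℝ) :
    a ^ (x + 2) * (∫ t in (0 : ℝ)..1, t ^ x * (1 - t) ^ 2 * (1 - a * t) ^ m)
        + (1 - a) * In (x + m) x a
      = ∫ u in (0 : ℝ)..a, (a - u) * (u ^ x * (1 - u) ^ (m + 1)) := by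
  rw [← sq_mul_integral_one_sub_mul_comp_mul, In, Nat.add_sub_cancel_left]
  simp only [← integral_const_mul]
  rw [← integral_add (by apply Continuous.intervalIntegrable; fun_prop)
    (by apply Continuous.intervalIntegrable; fun_prop)]
  congr 1
  ext t
  ring

theorem one_sub_mul_In_eq_integral (x m : ℕ) (a : ℝ) :
    (1 - a) * In (x + m) m (1 - a) = ∫ v in a..1, (v - a) * (v ^ x * (1 - v) ^ (m + 1)) := by
  calc (1 - a) * In (x + m) m (1 - a)
      = (1 - a) ^ 2 *
          ∫ t in (0 : ℝ)..1, (1 - t) * (((1 - a) * t) ^ (m + 1) * (1 - (1 - a) * t) ^ x) := by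
        rw [In, Nat.add_sub_cancel]
        simp only [← integral_const_mul]
        congr 1
        ext t
        rw [mul_pow]
        ring
    _ = ∫ s in (0 : ℝ)..(1 - a), (1 - a - s) * (s ^ (m + 1) * (1 - s) ^ x) :=
        sq_mul_integral_one_sub_mul_comp_mul (fun s => s ^ (m + 1) * (1 - s) ^ x) (1 - a)
    _ = ∫ v in a..1, (v - a) * (v ^ x * (1 - v) ^ (m + 1)) := by
        rw [← sub_self (1 : ℝ),
          ← integral_comp_sub_left (fun s => (1 - a - s) * (s ^ (m + 1) * (1 - s) ^ x)) 1]
        congr 1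
        ext v
        ring

theorem factorial_div_mul_integral_sub_mul (x m : ℕ) (a : ℝ) :
    (x + m + 3)! / (x ! * m !) * ∫ v in (0 : ℝ)..1, (v - a) * (v ^ x * (1 - v) ^ (m + 1))
      = (m + 1) * (x + 1) - (m + 1) * (x + m + 3) * a := by
  rw [integral_sub_mul_pow_mul_one_sub_pow, show x + 1 + (m + 1) + 1 = x + m + 2 + 1 by ring,
    show x + (m + 1) + 1 = x + m + 2 by ring, show x + m + 3 = x + m + 2 + 1 by ring]
  simp only [Nat.factorial_succ]
  push_cast
  field_simp
  ring

/-- `J_n(a, x) = ((n+3)!/(x!(n−x)!)) (1 − a) (I_n(1 − a, n − x) − I_n(a, x))`. -/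
theorem Jn_eq_In_diff (n x : ℕ) (hx : x ≤ n) (a : ℝ) :
    Jn n x a = (((n + 3).factorial : ℝ) / ((x.factorial : ℝ) * ((n - x).factorial : ℝ)))
      * (1 - a) * (In n (n - x) (1 - a) - In n x a) := by
  obtain ⟨m, rfl⟩ := Nat.exists_eq_add_of_le hx
  have hsum := two_mul_sum_choose_eq_integral x m a
  have hsplit := integral_sub_mul_sub_integral_sub_mul (fun v => v ^ x * (1 - v) ^ (m + 1))
    (by fun_prop) a 1 0
  rw [← one_sub_mul_In_eq_integral, ← pow_mul_integral_add_one_sub_mul_In] at hsplit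
  have haffine := factorial_div_mul_integral_sub_mul x m a
  simp only [Jn, Nat.add_sub_cancel_left]
  push_cast at hsum ⊢
  linear_combination a ^ (x + 2) * hsum - ((x + m + 3)! / (x ! * m !) : ℝ) * hsplit - haffine
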